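/- Let 0 < φ_1 ≤ ⋯ ≤ φ_m, integers k_a, k_d ≥ 1 with k_a + k_d ≤ m. Then max over α ∈ [0,1]^m with Σα = k_a of [min over (m−k_d)-subsets T of Σ_{l∈T} α_l φ_l] equals min over β ∈ [0,1]^m with Σβ = m − k_d of [max over k_a-subsets S of Σ_{l∈S} β_l φ_l]. -/

import Mathlib

/-!
The marginal strategy sets are hypersimplices `{w ∈ [0,1]^m | ∑ w = k}` and the payoff
`∑ α_l β_l φ_l` is bilinear, so Sion's minimax theorem gives a saddle point `(β*, α*)` of the two
polytopes. A linear function `w ↦ ∑ w_l a_l` on a hypersimplex is maximised at the indicator of the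
top `k` coordinates of `a`, so best responses against pure `k`-subsets and against marginals agree.
This yields weak duality between the two sides, and testing the saddle point against indicators
shows that both optimal values are attained, at `α*` and at `β*`.
-/

open Finset

theorem LinearMap.exists_isSaddlePointOn {E F : Type*}
    [TopologicalSpace E] [AddCommGroup E] [Module ℝ E] [IsTopologicalAddGroup E] [ContinuousSMul ℝ E]
    [TopologicalSpace F] [AddCommGroup F] [Module ℝ F] [IsTopologicalAddGroup F] [ContinuousSMul ℝ F]
    (B : E →ₗ[ℝ] F →ₗ[ℝ] ℝ) (hB₁ : ∀ y, Continuous fun x => B x y) (hB₂ : ∀ x, Continuous (B x))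
    {X : Set E} {Y : Set F} (hX : X.Nonempty) (cX : Convex ℝ X) (kX : IsCompact X)
    (hY : Y.Nonempty) (cY : Convex ℝ Y) (kY : IsCompact Y) :
    ∃ a ∈ X, ∃ b ∈ Y, IsSaddlePointOn X Y (fun x y => B x y) a b :=
  Sion.exists_isSaddlePointOn hX cX kX
    (fun y _ => (hB₁ y).lowerSemicontinuous.lowerSemicontinuousOn X)
    (fun y _ => ((B.flip y).convexOn cX).quasiconvexOn) cY hY kY
    (fun x _ => (hB₂ x).upperSemicontinuous.upperSemicontinuousOn Y)
    (fun x _ => ((B x).concaveOn cY).quasiconcaveOn)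

def hypersimplex (ι : Type*) [Fintype ι] (k : ℝ) : Set (ι → ℝ) :=
  {w | (∀ i, 0 ≤ w i ∧ w i ≤ 1) ∧ ∑ i, w i = k}

section Hypersimplex

variable {ι : Type*} [Fintype ι]

theorem hypersimplex_eq_Icc_inter (k : ℝ) :
    hypersimplex ι k = Set.Icc 0 1 ∩ {w | ∑ i, w i = k} := by
  ext w
  simp [hypersimplex, Pi.le_def, forall_and]

theorem convex_hypersimplex (k : ℝ) : Convex ℝ (hypersimplex ι k) := by
  rw [hypersimplex_eq_Icc_inter]
  exact (convex_Icc 0 1).inter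
    (convex_hyperplane ⟨fun _ _ => sum_add_distrib, fun _ _ => (mul_sum ..).symm⟩ k)

theorem isCompact_hypersimplex (k : ℝ) : IsCompact (hypersimplex ι k) := by
  rw [hypersimplex_eq_Icc_inter]
  exact isCompact_Icc.inter_right (isClosed_eq (by fun_prop) continuous_const)

theorem indicator_mem_hypersimplex [DecidableEq ι] {S : Finset ι} {k : ℕ} (hS : S.card = k) :
    (fun i => if i ∈ S then 1 else 0 : ι → ℝ) ∈ hypersimplex ι k := by
  refine ⟨fun i => ?_, ?_⟩
  · dsimp only
    split_ifs <;> norm_num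
  · rw [sum_boole, filter_mem_eq_inter, univ_inter, hS]

theorem nonempty_hypersimplex [DecidableEq ι] {k : ℕ}
    (hne : ((univ : Finset ι).powersetCard k).Nonempty) :
    (hypersimplex ι k).Nonempty :=
  let ⟨_, hS⟩ := hne
  ⟨_, indicator_mem_hypersimplex (mem_powersetCard_univ.1 hS)⟩

theorem exists_threshold (a : ι → ℝ) {S : Finset ι} (h : ∀ i ∈ S, ∀ j ∉ S, a j ≤ a i) :
    ∃ t, (∀ i ∈ S, t ≤ a i) ∧ ∀ j ∉ S, a j ≤ t := by
  rcases S.eq_empty_or_nonempty with rfl | hS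
  · exact ⟨∑ j, |a j|, by simp,
      fun j _ => (le_abs_self _).trans (single_le_sum (fun j _ => abs_nonneg (a j)) (mem_univ j))⟩
  · exact ⟨S.inf' hS a, fun i hi => inf'_le a hi, fun j hj => le_inf' hS a fun i hi => h i hi j hj⟩

theorem le_of_forall_sum_le_sum_powersetCard [DecidableEq ι] {a : ι → ℝ} {k : ℕ} {S : Finset ι}
    (hS : S ∈ univ.powersetCard k)
    (hmax : ∀ S' ∈ univ.powersetCard k, ∑ i ∈ S', a i ≤ ∑ i ∈ S, a i)
    {i j : ι} (hi : i ∈ S) (hj : j ∉ S) : a j ≤ a i := by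
  rw [mem_powersetCard_univ] at hS
  have hj' : j ∉ S.erase i := fun h => hj (mem_of_mem_erase h)
  have hswap : insert j (S.erase i) ∈ univ.powersetCard k := by
    rw [mem_powersetCard_univ, card_insert_of_notMem hj', card_erase_of_mem hi, hS]
    have : 0 < k := hS ▸ card_pos.2 ⟨i, hi⟩
    omega
  have := hmax _ hswap
  simp only [sum_insert hj', sum_erase_eq_sub hi] at this
  linarith

theorem sum_mul_le_sup'_powersetCard {k : ℕ} {w : ι → ℝ} (hw : w ∈ hypersimplex ι k) (a : ι → ℝ)
    (hne : (univ.powersetCard k).Nonempty) :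
    ∑ i, w i * a i ≤ (univ.powersetCard k).sup' hne fun S => ∑ i ∈ S, a i := by
  classical
  obtain ⟨S, hS, hmax⟩ := exists_max_image _ (fun S => ∑ i ∈ S, a i) hne
  obtain ⟨t, hSt, htS⟩ := exists_threshold a fun i hi j hj =>
    le_of_forall_sum_le_sum_powersetCard hS hmax hi hj
  let e : ι → ℝ := fun i => if i ∈ S then 1 else 0
  have he : e ∈ hypersimplex ι k := indicator_mem_hypersimplex (mem_powersetCard_univ.1 hS)
  -- `w` and `e` both have total mass `k`, so the threshold `t` can be subtracted from `a` freely.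
  have hsplit : ∑ i, w i * a i - ∑ i ∈ S, a i = ∑ i, (w i - e i) * (a i - t) := by
    have hSe : ∑ i ∈ S, a i = ∑ i, e i * a i := by simp [e, ite_mul]
    calc ∑ i, w i * a i - ∑ i ∈ S, a i
        = ∑ i, w i * a i - ∑ i, e i * a i - (∑ i, w i - ∑ i, e i) * t := by
          rw [hw.2, he.2, sub_self, zero_mul, sub_zero, hSe]
      _ = ∑ i, (w i - e i) * (a i - t) := by
          simp only [sub_mul, mul_sub, sum_sub_distrib, sum_mul]
  have hterm : ∀ i, (w i - e i) * (a i - t) ≤ 0 := by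
    intro i
    by_cases hi : i ∈ S
    · simp only [e, if_pos hi]
      exact mul_nonpos_of_nonpos_of_nonneg (by linarith [(hw.1 i).2]) (by linarith [hSt i hi])
    · simp only [e, if_neg hi, sub_zero]
      exact mul_nonpos_of_nonneg_of_nonpos (hw.1 i).1 (by linarith [htS i hi])
  have hnonpos : ∑ i, (w i - e i) * (a i - t) ≤ 0 := sum_nonpos fun i _ => hterm i
  calc ∑ i, w i * a i ≤ ∑ i ∈ S, a i := by linarith
    _ ≤ _ := le_sup' (fun S => ∑ i ∈ S, a i) hS

theorem inf'_powersetCard_le_sum_mul {k : ℕ} {w : ι → ℝ} (hw : w ∈ hypersimplex ι k) (a : ι → ℝ)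
    (hne : (univ.powersetCard k).Nonempty) :
    (univ.powersetCard k).inf' hne (fun S => ∑ i ∈ S, a i) ≤ ∑ i, w i * a i := by
  obtain ⟨S, hS, hSw⟩ := (le_sup'_iff hne).1 (sum_mul_le_sup'_powersetCard hw (-a) hne)
  simp only [Pi.neg_apply, mul_neg, sum_neg_distrib, neg_le_neg_iff] at hSw
  exact inf'_le_of_le _ hS hSw

end Hypersimplex

theorem csSup_eq_csInf_of_forall_le {α : Type*} [ConditionallyCompleteLattice α] {A B : Set α}
    (h : ∀ x ∈ A, ∀ y ∈ B, x ≤ y) {a b : α} (ha : a ∈ A) (hb : b ∈ B) (hba : b ≤ a) :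
    sSup A = sInf B := by
  have hab : a = b := le_antisymm (h a ha b hb) hba
  rw [IsGreatest.csSup_eq ⟨ha, fun x hx => (h x hx b hb).trans hba⟩,
    IsLeast.csInf_eq ⟨hb, fun y hy => hab ▸ h a ha y hy⟩, hab]

theorem stmt_19_general (m ka kd : ℕ) (hsum : ka + kd ≤ m) (φ : Fin m → ℝ)
    (hneT : ((Finset.univ : Finset (Fin m)).powersetCard (m - kd)).Nonempty)
    (hneS : ((Finset.univ : Finset (Fin m)).powersetCard ka).Nonempty) :
    sSup {v : ℝ | ∃ α : Fin m → ℝ, (∀ i, 0 ≤ α i ∧ α i ≤ 1) ∧ (∑ i, α i = (ka : ℝ)) ∧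
        v = (Finset.univ.powersetCard (m - kd)).inf' hneT (fun T => ∑ l ∈ T, α l * φ l)}
      = sInf {v : ℝ | ∃ β : Fin m → ℝ, (∀ i, 0 ≤ β i ∧ β i ≤ 1) ∧
          (∑ i, β i = (m : ℝ) - kd) ∧
          v = (Finset.univ.powersetCard ka).sup' hneS (fun S => ∑ l ∈ S, β l * φ l)} := by
  have hcast : ((m - kd : ℕ) : ℝ) = m - kd := Nat.cast_sub (by omega)
  let payoff : (Fin m → ℝ) →ₗ[ℝ] (Fin m → ℝ) →ₗ[ℝ] ℝ := Matrix.toLinearMap₂' ℝ (Matrix.diagonal φ)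
  have hpayoff : ∀ β α, payoff β α = ∑ l, β l * α l * φ l := fun β α => by
    simp only [payoff, Matrix.toLinearMap₂'_apply', dotProduct, Matrix.mulVec_diagonal]
    exact sum_congr rfl fun l _ => by ring
  obtain ⟨β₀, hβ₀, α₀, hα₀, hsaddle⟩ := LinearMap.exists_isSaddlePointOn payoff
    (fun y => (payoff.flip y).continuous_of_finiteDimensional)
    (fun x => (payoff x).continuous_of_finiteDimensional)
    (nonempty_hypersimplex hneT) (convex_hypersimplex _) (isCompact_hypersimplex _)
    (nonempty_hypersimplex hneS) (convex_hypersimplex _) (isCompact_hypersimplex _)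
  refine csSup_eq_csInf_of_forall_le ?_ ⟨α₀, hα₀.1, hα₀.2, rfl⟩
    ⟨β₀, hβ₀.1, hcast ▸ hβ₀.2, rfl⟩ ?_
  · rintro _ ⟨α, hα, hαsum, rfl⟩ _ ⟨β, hβ, hβsum, rfl⟩
    calc _ ≤ ∑ l, β l * (α l * φ l) := inf'_powersetCard_le_sum_mul ⟨hβ, hcast ▸ hβsum⟩ _ hneT
      _ = ∑ l, α l * (β l * φ l) := sum_congr rfl fun l _ => by ring
      _ ≤ _ := sum_mul_le_sup'_powersetCard ⟨hα, hαsum⟩ _ hneS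
  · refine sup'_le _ _ fun S hS => le_inf' _ _ fun T hT => ?_
    have := hsaddle _ (indicator_mem_hypersimplex (mem_powersetCard_univ.1 hT))
      _ (indicator_mem_hypersimplex (mem_powersetCard_univ.1 hS))
    simpa only [hpayoff, mul_ite, ite_mul, mul_one, one_mul, mul_zero, zero_mul, sum_ite_mem,
      univ_inter] using this

/-- Minimax equality for the marginal security game with `k_a + k_d ≤ m`:
`max_{α ∈ [0,1]^m, Σα = k_a} min_{|T| = m−k_d} Σ_{l∈T} α_l φ_l
  = min_{β ∈ [0,1]^m, Σβ = m−k_d} max_{|S| = k_a} Σ_{l∈S} β_l φ_l`. -/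
theorem stmt_19 (m ka kd : ℕ) (hka : 1 ≤ ka) (hkd : 1 ≤ kd) (hsum : ka + kd ≤ m)
    (φ : Fin m → ℝ) (hφpos : ∀ i, 0 < φ i) (hφmono : Monotone φ)
    (hneT : ((Finset.univ : Finset (Fin m)).powersetCard (m - kd)).Nonempty)
    (hneS : ((Finset.univ : Finset (Fin m)).powersetCard ka).Nonempty) :
    sSup {v : ℝ | ∃ α : Fin m → ℝ, (∀ i, 0 ≤ α i ∧ α i ≤ 1) ∧ (∑ i, α i = (ka : ℝ)) ∧
        v = (Finset.univ.powersetCard (m - kd)).inf' hneT (fun T => ∑ l ∈ T, α l * φ l)}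
      = sInf {v : ℝ | ∃ β : Fin m → ℝ, (∀ i, 0 ≤ β i ∧ β i ≤ 1) ∧
          (∑ i, β i = (m : ℝ) - kd) ∧
          v = (Finset.univ.powersetCard ka).sup' hneS (fun S => ∑ l ∈ S, β l * φ l)} :=
  stmt_19_general m ka kd hsum φ hneT hneS
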